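/- Let U be a unitary with ind(U) = Tr(U*PU - P) = 0 and [P,U] finite rank. Then there exists a unitary V with V - 1 of finite rank such that UV commutes with P, i.e., P(UV) = (UV)P. -/

import Mathlib

/-- A continuous linear operator has finite rank if its range is finite dimensional. -/
def FiniteRankOp {H : Type*} [NormedAddCommGroup H] [InnerProductSpace ℂ H]
    (T : H →L[ℂ] H) : Prop :=
  FiniteDimensional ℂ (LinearMap.range (T : H →ₗ[ℂ] H))

/-- The trace of a finite-rank operator, computed as the trace of its compression to
its (finite-dimensional) range. -/
noncomputable def trFR {H : Type*} [NormedAddCommGroup H] [InnerProductSpace ℂ H]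
    (T : H →L[ℂ] H) : ℂ :=
  LinearMap.trace ℂ (LinearMap.range (T : H →ₗ[ℂ] H))
    ((T : H →ₗ[ℂ] H).restrict fun x _ => LinearMap.mem_range_self _ x)

/-!
Set `Q = U* P U`, again an orthogonal projection, with `Q - P = U* [P, U]` of finite rank. The
finite-dimensional space `K = ran (Q - P) + P ran (Q - P)` reduces both `P` and `Q`, and `Q = P`
on `Kᗮ`. On `K` the vanishing index says `tr Q|K = tr P|K`, so `P|K` and `Q|K` have ranges of
equal dimension, and then so do their kernels; an isometry of `K` matching orthonormal bases of
these ranges and kernels, extended by the identity on `Kᗮ`, is a unitary `V` with `V - 1` of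
finite rank and `Q V = V P`. Then `P U V = U Q V = U V P`.
-/

open Submodule Module

theorem LinearMap.trace_restrict_eq_of_range_le {R M : Type*} [Field R] [AddCommGroup M]
    [Module R M] (f : M →ₗ[R] M) {K : Submodule R M} [FiniteDimensional R K]
    (h : range f ≤ K) (hK : ∀ x ∈ K, f x ∈ K) :
    trace R K (f.restrict hK) = trace R (range f) (f.restrict fun x _ => mem_range_self f x) := by
  have : FiniteDimensional R (range f) := Submodule.finiteDimensional_of_le h
  let u : K →ₗ[R] range f := f.domRestrict K |>.codRestrict (range f) fun x => mem_range_self f x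
  rw [show f.restrict hK = Submodule.inclusion h ∘ₗ u from rfl,
    show f.restrict (fun x _ => mem_range_self f x) = u ∘ₗ Submodule.inclusion h from rfl,
    trace_comp_comm']

theorem FiniteRankOp.mul_left {H : Type*} [NormedAddCommGroup H] [InnerProductSpace ℂ H]
    {T : H →L[ℂ] H} (hT : FiniteRankOp T) (A : H →L[ℂ] H) : FiniteRankOp (A * T) := by
  have : FiniteDimensional ℂ (LinearMap.range (T : H →ₗ[ℂ] H)) := hT
  unfold FiniteRankOp
  rw [ContinuousLinearMap.toLinearMap_mul, Module.End.mul_eq_comp, LinearMap.range_comp]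
  infer_instance

theorem IsStarProjection.star_mul_mul_of_mem_unitary {R : Type*} [Monoid R] [StarMul R]
    {p u : R} (hp : IsStarProjection p) (hu : u ∈ unitary R) :
    IsStarProjection (star u * p * u) where
  isSelfAdjoint := hp.isSelfAdjoint.conjugate' u
  isIdempotentElem := by
    calc star u * p * u * (star u * p * u) = star u * (p * (u * star u) * p) * u := by
          simp only [mul_assoc]
      _ = star u * p * u := by
          rw [Unitary.mul_star_self_of_mem hu, mul_one, hp.isIdempotentElem.eq, mul_assoc]

section InnerProductSpace

variable {𝕜 H : Type*} [RCLike 𝕜] [NormedAddCommGroup H] [InnerProductSpace 𝕜 H]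

theorem LinearMap.IsSymmetricProjection.restrict {p : H →ₗ[𝕜] H}
    (hp : p.IsSymmetricProjection) {K : Submodule 𝕜 H} (hK : ∀ x ∈ K, p x ∈ K) :
    (p.restrict hK).IsSymmetricProjection where
  isIdempotentElem := by
    ext x
    exact congr($(hp.isIdempotentElem.eq) x)
  isSymmetric := hp.isSymmetric.restrict_invariant hK

theorem LinearMap.IsSymmetric.mapsTo_orthogonal {T : H →ₗ[𝕜] H} (hT : T.IsSymmetric)
    {K : Submodule 𝕜 H} (hK : ∀ x ∈ K, T x ∈ K) : ∀ x ∈ Kᗮ, T x ∈ Kᗮ := fun x hx y hy => by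
  rw [← hT]
  exact hx _ (hK y hy)

theorem ContinuousLinearMap.ext_of_orthogonal {K : Submodule 𝕜 H} [K.HasOrthogonalProjection]
    {A B : H →L[𝕜] H} (hK : ∀ x ∈ K, A x = B x) (hKo : ∀ x ∈ Kᗮ, A x = B x) : A = B := by
  ext x
  rw [← K.starProjection_add_starProjection_orthogonal x, map_add, map_add,
    hK _ (K.starProjection_apply_mem x), hKo _ (Kᗮ.starProjection_apply_mem x)]

namespace LinearIsometryEquiv

variable {E F : Submodule 𝕜 H} [E.HasOrthogonalProjection] [F.HasOrthogonalProjection]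

noncomputable def orthogonalSum (f : E ≃ₗᵢ[𝕜] F) (g : Eᗮ ≃ₗᵢ[𝕜] Fᗮ) : H ≃ₗᵢ[𝕜] H :=
  E.orthogonalDecomposition.trans ((withLpProdCongr 2 f g).trans F.orthogonalDecomposition.symm)

variable (f : E ≃ₗᵢ[𝕜] F) (g : Eᗮ ≃ₗᵢ[𝕜] Fᗮ)

theorem orthogonalSum_apply (x : H) :
    orthogonalSum f g x =
      (f (E.orthogonalProjectionOnto x) : H) + g (Eᗮ.orthogonalProjectionOnto x) := by
  simp [orthogonalSum]

theorem starProjection_orthogonalSum (x : H) :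
    F.starProjection (orthogonalSum f g x) = orthogonalSum f g (E.starProjection x) := by
  simp [orthogonalSum_apply, starProjection_eq_self_iff.mpr (f _).2,
    (F.starProjection_apply_eq_zero_iff).mpr (g _).2,
    orthogonalProjectionOnto_starProjection_of_le le_rfl,
    orthogonalProjectionOnto_orthogonal_apply_eq_zero (E.starProjection_apply_mem x)]

variable {K : Submodule 𝕜 H} [K.HasOrthogonalProjection] (v : K ≃ₗᵢ[𝕜] K)

theorem orthogonalSum_refl_apply_of_mem {x : H} (hx : x ∈ K) :
    orthogonalSum v (.refl 𝕜 Kᗮ) x = v ⟨x, hx⟩ := by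
  simp [orthogonalSum_apply, orthogonalProjectionOnto_mem_subspace_eq_self ⟨x, hx⟩,
    orthogonalProjectionOnto_orthogonal_apply_eq_zero hx]

theorem orthogonalSum_refl_apply_of_mem_orthogonal {x : H} (hx : x ∈ Kᗮ) :
    orthogonalSum v (.refl 𝕜 Kᗮ) x = x := by
  simp [orthogonalSum_apply, orthogonalProjectionOnto_apply_of_mem_orthogonal hx,
    orthogonalProjectionOnto_mem_subspace_eq_self (K := Kᗮ) ⟨x, hx⟩]

theorem orthogonalSum_refl_sub_self_mem (x : H) : orthogonalSum v (.refl 𝕜 Kᗮ) x - x ∈ K := by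
  nth_rw 2 [← K.starProjection_add_starProjection_orthogonal x]
  rw [orthogonalSum_apply, coe_refl, id_eq, ← starProjection_apply, add_sub_add_right_eq_sub]
  exact K.sub_mem (v _).2 (K.starProjection_apply_mem x)

end LinearIsometryEquiv

theorem Submodule.exists_linearIsometryEquiv_intertwining_of_finrank_eq [FiniteDimensional 𝕜 H]
    {E F : Submodule 𝕜 H} (h : finrank 𝕜 E = finrank 𝕜 F) :
    ∃ v : H ≃ₗᵢ[𝕜] H, ∀ x, F.starProjection (v x) = v (E.starProjection x) := by
  have h' : finrank 𝕜 Eᗮ = finrank 𝕜 Fᗮ := by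
    have := E.finrank_add_finrank_orthogonal
    have := F.finrank_add_finrank_orthogonal
    omega
  exact ⟨.orthogonalSum ((stdOrthonormalBasis 𝕜 E).equiv (stdOrthonormalBasis 𝕜 F) (finCongr h))
    ((stdOrthonormalBasis 𝕜 Eᗮ).equiv (stdOrthonormalBasis 𝕜 Fᗮ) (finCongr h')),
    LinearIsometryEquiv.starProjection_orthogonalSum _ _⟩

theorem LinearMap.IsSymmetricProjection.exists_linearIsometryEquiv_intertwining
    [FiniteDimensional 𝕜 H] {p q : H →ₗ[𝕜] H} (hp : p.IsSymmetricProjection)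
    (hq : q.IsSymmetricProjection) (htr : trace 𝕜 H p = trace 𝕜 H q) :
    ∃ v : H ≃ₗᵢ[𝕜] H, ∀ x, q (v x) = v (p x) := by
  have hrank : finrank 𝕜 (range p) = finrank 𝕜 (range q) := by
    rwa [(IsIdempotentElem.isProj_range p hp.isIdempotentElem).trace,
      (IsIdempotentElem.isProj_range q hq.isIdempotentElem).trace, Nat.cast_inj] at htr
  obtain ⟨_, hp'⟩ := p.isSymmetricProjection_iff_eq_coe_starProjection_range.mp hp
  obtain ⟨_, hq'⟩ := q.isSymmetricProjection_iff_eq_coe_starProjection_range.mp hq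
  obtain ⟨v, hv⟩ := exists_linearIsometryEquiv_intertwining_of_finrank_eq hrank
  refine ⟨v, fun x => ?_⟩
  rw [hp', hq']
  exact hv x

theorem IsStarProjection.exists_unitary_intertwining_of_reducing [CompleteSpace H]
    {P Q : H →L[𝕜] H} (hP : IsStarProjection P) (hQ : IsStarProjection Q)
    {K : Submodule 𝕜 H} [FiniteDimensional 𝕜 K]
    (hPK : ∀ x ∈ K, P x ∈ K) (hQK : ∀ x ∈ K, Q x ∈ K) (hPQ : ∀ x ∈ Kᗮ, Q x = P x)
    (htr : LinearMap.trace 𝕜 K ((P : H →ₗ[𝕜] H).restrict hPK) =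
      LinearMap.trace 𝕜 K ((Q : H →ₗ[𝕜] H).restrict hQK)) :
    ∃ V ∈ unitary (H →L[𝕜] H), LinearMap.range ((V - 1 : H →L[𝕜] H) : H →ₗ[𝕜] H) ≤ K ∧
      Q * V = V * P := by
  have hP' := ContinuousLinearMap.IsStarProjection.isSymmetricProjection hP
  have hQ' := ContinuousLinearMap.IsStarProjection.isSymmetricProjection hQ
  obtain ⟨v, hv⟩ :=
    (hP'.restrict hPK).exists_linearIsometryEquiv_intertwining (hQ'.restrict hQK) htr
  set W := LinearIsometryEquiv.orthogonalSum v (.refl 𝕜 Kᗮ)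
  have hPKo := hP'.isSymmetric.mapsTo_orthogonal hPK
  refine ⟨W, Unitary.coe_symm_linearIsometryEquiv_apply W ▸ (Unitary.linearIsometryEquiv.symm W).2,
    ?_, ContinuousLinearMap.ext_of_orthogonal (K := K) (fun x hx => ?_) (fun x hx => ?_)⟩
  · rintro _ ⟨x, rfl⟩
    exact v.orthogonalSum_refl_sub_self_mem x
  · change Q (W x) = W (P x)
    calc Q (W x) = Q (v ⟨x, hx⟩) := by rw [v.orthogonalSum_refl_apply_of_mem hx]
      _ = v ⟨P x, hPK x hx⟩ := congr(($(hv ⟨x, hx⟩) : H))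
      _ = W (P x) := (v.orthogonalSum_refl_apply_of_mem _).symm
  · change Q (W x) = W (P x)
    rw [v.orthogonalSum_refl_apply_of_mem_orthogonal hx,
      v.orthogonalSum_refl_apply_of_mem_orthogonal (x := P x) (hPKo x hx), hPQ x hx]

end InnerProductSpace

theorem IsStarProjection.exists_unitary_intertwining_of_trFR_sub_eq_zero {H : Type*}
    [NormedAddCommGroup H] [InnerProductSpace ℂ H] [CompleteSpace H] {P Q : H →L[ℂ] H}
    (hP : IsStarProjection P) (hQ : IsStarProjection Q) (hfin : FiniteRankOp (Q - P))
    (htr : trFR (Q - P) = 0) :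
    ∃ V ∈ unitary (H →L[ℂ] H), FiniteRankOp (V - 1) ∧ Q * V = V * P := by
  set D : H →ₗ[ℂ] H := ((Q - P : H →L[ℂ] H) : H →ₗ[ℂ] H)
  set K := LinearMap.range D ⊔ (LinearMap.range D).map (P : H →ₗ[ℂ] H)
  have : FiniteDimensional ℂ (LinearMap.range D) := hfin
  have hDK : LinearMap.range D ≤ K := le_sup_left
  have hPK : ∀ x ∈ K, P x ∈ K := by
    have hPP : (P : H →ₗ[ℂ] H) ∘ₗ P = P :=
      LinearMap.ext fun x => congr($(hP.isIdempotentElem.eq) x)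
    have : K.map (P : H →ₗ[ℂ] H) ≤ (LinearMap.range D).map (P : H →ₗ[ℂ] H) := by
      rw [Submodule.map_sup, ← Submodule.map_comp, hPP, sup_idem]
    exact fun x hx => Submodule.mem_sup_right (this ⟨x, hx, rfl⟩)
  have hQK : ∀ x ∈ K, Q x ∈ K := fun x hx => by
    rw [show Q x = D x + P x by simp [D]]
    exact K.add_mem (hDK ⟨x, rfl⟩) (hPK x hx)
  have hPQ : ∀ x ∈ Kᗮ, Q x = P x := fun x hx => by
    have hker : Kᗮ ≤ LinearMap.ker D := by
      rw [← ContinuousLinearMap.IsStarNormal.orthogonal_range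
        (hQ.isSelfAdjoint.sub hP.isSelfAdjoint).isStarNormal]
      exact Submodule.orthogonal_le hDK
    simpa [D, sub_eq_zero] using hker hx
  obtain ⟨V, hV, hVK, hQV⟩ := hP.exists_unitary_intertwining_of_reducing hQ hPK hQK hPQ (by
    rw [eq_comm, ← sub_eq_zero, ← map_sub]
    exact (D.trace_restrict_eq_of_range_le hDK fun x _ => hDK ⟨x, rfl⟩).trans htr)
  exact ⟨V, hV, Submodule.finiteDimensional_of_le hVK, hQV⟩

/-- If `U` is a unitary with `[P,U]` of finite rank and vanishing index
`Tr(U* P U - P) = 0`, then there is a unitary `V` with `V - 1` of finite rank such that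
`U V` commutes with `P`. -/
theorem index_zero_decoupling
    {H : Type*} [NormedAddCommGroup H] [InnerProductSpace ℂ H] [CompleteSpace H]
    (U P : H →L[ℂ] H) (hU : U ∈ unitary (H →L[ℂ] H))
    (hP_proj : P ∘L P = P) (hP_sa : IsSelfAdjoint P)
    (hfin : FiniteRankOp (P * U - U * P))
    (hind : trFR (star U * P * U - P) = 0) :
    ∃ V ∈ unitary (H →L[ℂ] H),
      FiniteRankOp (V - 1) ∧ P * (U * V) = (U * V) * P := by
  have hP : IsStarProjection P := ⟨hP_proj, hP_sa⟩
  have hQP : star U * P * U - P = star U * (P * U - U * P) := by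
    rw [mul_sub, ← mul_assoc, ← mul_assoc, Unitary.star_mul_self_of_mem hU, one_mul]
  obtain ⟨V, hV, hVfin, hQV⟩ := hP.exists_unitary_intertwining_of_trFR_sub_eq_zero
    (hP.star_mul_mul_of_mem_unitary hU) (hQP ▸ hfin.mul_left _) hind
  refine ⟨V, hV, hVfin, ?_⟩
  calc P * (U * V) = U * (star U * P * U * V) := by
        simp only [← mul_assoc, Unitary.mul_star_self_of_mem hU, one_mul]
    _ = U * V * P := by rw [hQV, mul_assoc]
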